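/- Let q ≥ 2 and fix m ∈ Fin q. In V define the row and column sums A_r := q·Σ_j a_{mj} − Σ_{k,ℓ} a_{kℓ}, A_c := q·Σ_i a_{im} − Σ_{k,ℓ} a_{kℓ}, B_r := q·Σ_j b_{mj} − Σ_{k,ℓ} b_{kℓ}, B_c := q·Σ_i b_{im} − Σ_{k,ℓ} b_{kℓ}. Then T A_r = −(q−1)·A_c − q·B_c, T A_c = −(q−1)·A_r − q·B_r, T B_r = A_c + B_c, and T B_c = A_r + B_r. In particular the 4-dimensional subspace spanned by A_r, A_c, B_r, B_c is T-invariant and the characteristic polynomial of the restriction of T to it is (X² + 1)² − (q − 2)² X². -/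

import Mathlib

/-- Index type for the basis `{h, r} ∪ {a_{ij}} ∪ {b_{ij}}` of `Pic(Z) ⊗ ℚ`. -/
abbrev PicIdx (q : ℕ) := Unit ⊕ Unit ⊕ (Fin q × Fin q) ⊕ (Fin q × Fin q)

noncomputable section

/-- The standard basis of the free `ℚ`-vector space `V = PicIdx q → ℚ`. -/
def picBasis (q : ℕ) : Module.Basis (PicIdx q) ℚ (PicIdx q → ℚ) := Pi.basisFun ℚ (PicIdx q)

/-- The basis vector `h` (the class of a hyperplane `H`). -/
def vh (q : ℕ) : PicIdx q → ℚ := picBasis q (Sum.inl ())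

/-- The basis vector `r` (the class of the exceptional divisor `R¹`). -/
def vr (q : ℕ) : PicIdx q → ℚ := picBasis q (Sum.inr (Sum.inl ()))

/-- The basis vector `a_{ij}` (the class of the exceptional divisor `A^{ij}`). -/
def va (q : ℕ) (i j : Fin q) : PicIdx q → ℚ := picBasis q (Sum.inr (Sum.inr (Sum.inl (i, j))))

/-- The basis vector `b_{ij}` (the class of the exceptional divisor `B^{ij}`). -/
def vb (q : ℕ) (i j : Fin q) : PicIdx q → ℚ := picBasis q (Sum.inr (Sum.inr (Sum.inr (i, j))))

/-- `Σ_{k,ℓ} a_{kℓ}`. -/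
def sa (q : ℕ) : PicIdx q → ℚ := ∑ p : Fin q × Fin q, va q p.1 p.2

/-- `Σ_{k,ℓ} b_{kℓ}`. -/
def sb (q : ℕ) : PicIdx q → ℚ := ∑ p : Fin q × Fin q, vb q p.1 p.2

/-- The linear map `T = K*` on `Pic(Z) ⊗ ℚ` of Proposition 6.1, determined on the basis by
`T h = (q²−q+1)h − (q−2)r − (2q−3)Σa − (2q−2)Σb`,
`T r = (q²−q)h − (q−1)r − (2q−3)Σa − (2q−2)Σb`,
`T a_{ij} = h − b_{ji} − Σ_{(k,ℓ) : k=j ∨ ℓ=i}(a_{kℓ} + b_{kℓ})`, and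
`T b_{ij} = a_{ji} + b_{ji}`. -/
def Tpic (q : ℕ) : (PicIdx q → ℚ) →ₗ[ℚ] (PicIdx q → ℚ) :=
  (picBasis q).constr ℚ fun idx =>
    match idx with
    | Sum.inl _ =>
        ((q : ℚ) ^ 2 - q + 1) • vh q - ((q : ℚ) - 2) • vr q
          - (2 * (q : ℚ) - 3) • sa q - (2 * (q : ℚ) - 2) • sb q
    | Sum.inr (Sum.inl _) =>
        ((q : ℚ) ^ 2 - q) • vh q - ((q : ℚ) - 1) • vr q
          - (2 * (q : ℚ) - 3) • sa q - (2 * (q : ℚ) - 2) • sb q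
    | Sum.inr (Sum.inr (Sum.inl (i, j))) =>
        vh q - vb q j i
          - ∑ p ∈ Finset.univ.filter (fun p : Fin q × Fin q => p.1 = j ∨ p.2 = i),
              (va q p.1 p.2 + vb q p.1 p.2)
    | Sum.inr (Sum.inr (Sum.inr (i, j))) => va q j i + vb q j i

end

/-- The row sum `A_r = q·Σ_j a_{mj} − Σ_{k,ℓ} a_{kℓ}`. -/
noncomputable def Ar (q : ℕ) (m : Fin q) : PicIdx q → ℚ := (q : ℚ) • ∑ j, va q m j - sa q

/-- The column sum `A_c = q·Σ_i a_{im} − Σ_{k,ℓ} a_{kℓ}`. -/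
noncomputable def Ac (q : ℕ) (m : Fin q) : PicIdx q → ℚ := (q : ℚ) • ∑ i, va q i m - sa q

/-- The row sum `B_r = q·Σ_j b_{mj} − Σ_{k,ℓ} b_{kℓ}`. -/
noncomputable def Br (q : ℕ) (m : Fin q) : PicIdx q → ℚ := (q : ℚ) • ∑ j, vb q m j - sb q

/-- The column sum `B_c = q·Σ_i b_{im} − Σ_{k,ℓ} b_{kℓ}`. -/
noncomputable def Bc (q : ℕ) (m : Fin q) : PicIdx q → ℚ := (q : ℚ) • ∑ i, vb q i m - sb q

noncomputable section Aux
variable (q : ℕ)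

lemma sum_filter_or {M : Type*} [AddCommGroup M] (i j : Fin q) (f : Fin q × Fin q → M) :
    ∑ p ∈ Finset.univ.filter (fun p : Fin q × Fin q => p.1 = j ∨ p.2 = i), f p
      = (∑ l, f (j, l)) + (∑ k, f (k, i)) - f (j, i) := by
  classical
  have key : ∀ p : Fin q × Fin q, (if p.1 = j ∨ p.2 = i then f p else 0)
      = (if p.1 = j then f p else 0) + (if p.2 = i then f p else 0)
        - (if p = (j, i) then f p else 0) := by
    intro p
    by_cases h1 : p.1 = j <;> by_cases h2 : p.2 = i <;>
      simp [h1, h2, Prod.ext_iff]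
  rw [Finset.sum_filter]
  simp only [key]
  rw [Finset.sum_sub_distrib, Finset.sum_add_distrib]
  congr 1
  · congr 1
    · rw [Fintype.sum_prod_type]
      rw [Finset.sum_congr rfl (fun x _ => by
        show (∑ l, if x = j then f (x, l) else 0) = if x = j then ∑ l, f (x, l) else 0
        split <;> simp)]
      simp
    · rw [Fintype.sum_prod_type_right]
      rw [Finset.sum_congr rfl (fun x _ => by
        show (∑ k, if x = i then f (k, x) else 0) = if x = i then ∑ k, f (k, x) else 0
        split <;> simp)]
      simp
  · simp

lemma Tpic_vb (i j : Fin q) : Tpic q (vb q i j) = va q j i + vb q j i := by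
  simp only [Tpic, vb]
  exact Module.Basis.constr_basis _ _ _ _

/-- Row and column sums. -/
def RA (i : Fin q) : PicIdx q → ℚ := ∑ l, va q i l
def CA (j : Fin q) : PicIdx q → ℚ := ∑ k, va q k j
def RB (i : Fin q) : PicIdx q → ℚ := ∑ l, vb q i l
def CB (j : Fin q) : PicIdx q → ℚ := ∑ k, vb q k j

lemma Tpic_va (i j : Fin q) : Tpic q (va q i j)
    = vh q - vb q j i - ((RA q j + RB q j) + (CA q i + CB q i) - (va q j i + vb q j i)) := by
  have h : Tpic q (va q i j) = vh q - vb q j i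
      - ∑ p ∈ Finset.univ.filter (fun p : Fin q × Fin q => p.1 = j ∨ p.2 = i),
          (va q p.1 p.2 + vb q p.1 p.2) := by
    simp only [Tpic, va]
    exact Module.Basis.constr_basis _ _ _ _
  rw [h, sum_filter_or]
  simp only [RA, RB, CA, CB, Finset.sum_add_distrib]

end Aux

section Aux2
variable (q : ℕ) (m : Fin q)

lemma sa_rows : sa q = ∑ i, RA q i := by
  rw [sa, Fintype.sum_prod_type]; rfl
lemma sa_cols : sa q = ∑ j, CA q j := by
  rw [sa, Fintype.sum_prod_type_right]; rfl
lemma sb_rows : sb q = ∑ i, RB q i := by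
  rw [sb, Fintype.sum_prod_type]; rfl
lemma sb_cols : sb q = ∑ j, CB q j := by
  rw [sb, Fintype.sum_prod_type_right]; rfl

lemma L_row : ∑ j, Tpic q (va q m j)
    = (q : ℚ) • vh q - CB q m - (sa q + sb q)
      - (q : ℚ) • (CA q m + CB q m) + (CA q m + CB q m) := by
  simp only [Tpic_va, Finset.sum_sub_distrib, Finset.sum_add_distrib, Finset.sum_const,
    Finset.card_univ, Fintype.card_fin, ← Nat.cast_smul_eq_nsmul ℚ]
  rw [← sa_rows, ← sb_rows,
    show (∑ j, vb q j m) = CB q m from rfl, show (∑ j, va q j m) = CA q m from rfl]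
  module

lemma L_col : ∑ i, Tpic q (va q i m)
    = (q : ℚ) • vh q - RB q m - (sa q + sb q)
      - (q : ℚ) • (RA q m + RB q m) + (RA q m + RB q m) := by
  simp only [Tpic_va, Finset.sum_sub_distrib, Finset.sum_add_distrib, Finset.sum_const,
    Finset.card_univ, Fintype.card_fin, ← Nat.cast_smul_eq_nsmul ℚ]
  rw [← sa_cols, ← sb_cols,
    show (∑ i, vb q m i) = RB q m from rfl, show (∑ i, va q m i) = RA q m from rfl]
  module

lemma T_sa : Tpic q (sa q)
    = ((q : ℚ) ^ 2) • vh q - sb q - (2 * (q : ℚ) - 1) • (sa q + sb q) := by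
  have h : Tpic q (sa q) = ∑ p : Fin q × Fin q, Tpic q (va q p.1 p.2) := by
    rw [sa, map_sum]
  rw [h, Fintype.sum_prod_type, Finset.sum_congr rfl (fun i _ => L_row q i)]
  simp only [Finset.sum_sub_distrib, Finset.sum_add_distrib, ← Finset.smul_sum,
    Finset.sum_const, Finset.card_univ, Fintype.card_fin, ← Nat.cast_smul_eq_nsmul ℚ]
  rw [← sa_cols, ← sb_cols]
  module

lemma T_sb : Tpic q (sb q) = sa q + sb q := by
  have h : Tpic q (sb q) = ∑ p : Fin q × Fin q, Tpic q (vb q p.1 p.2) := by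
    rw [sb, map_sum]
  rw [h, Finset.sum_congr rfl (fun p _ => Tpic_vb q p.1 p.2), Finset.sum_add_distrib]
  rw [show (∑ p : Fin q × Fin q, va q p.2 p.1) = sa q by
      rw [sa, Fintype.sum_prod_type_right, Fintype.sum_prod_type],
    show (∑ p : Fin q × Fin q, vb q p.2 p.1) = sb q by
      rw [sb, Fintype.sum_prod_type_right, Fintype.sum_prod_type]]

lemma T_Ar : Tpic q (Ar q m) = -((q : ℚ) - 1) • Ac q m - (q : ℚ) • Bc q m := by
  rw [Ar, map_sub, map_smul, map_sum, L_row, T_sa, Ac, Bc,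
    show (∑ i, va q i m) = CA q m from rfl, show (∑ i, vb q i m) = CB q m from rfl]
  module

lemma T_Ac : Tpic q (Ac q m) = -((q : ℚ) - 1) • Ar q m - (q : ℚ) • Br q m := by
  rw [Ac, map_sub, map_smul, map_sum, L_col, T_sa, Ar, Br,
    show (∑ i, va q m i) = RA q m from rfl, show (∑ i, vb q m i) = RB q m from rfl]
  module

lemma T_Br : Tpic q (Br q m) = Ac q m + Bc q m := by
  rw [Br, map_sub, map_smul, map_sum, T_sb,
    Finset.sum_congr rfl (fun j _ => Tpic_vb q m j), Finset.sum_add_distrib, Ac, Bc,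
    show (∑ j, va q j m) = CA q m from rfl, show (∑ j, vb q j m) = CB q m from rfl]
  module

lemma T_Bc : Tpic q (Bc q m) = Ar q m + Br q m := by
  rw [Bc, map_sub, map_smul, map_sum, T_sb,
    Finset.sum_congr rfl (fun i _ => Tpic_vb q i m), Finset.sum_add_distrib, Ar, Br,
    show (∑ i, va q m i) = RA q m from rfl, show (∑ i, vb q m i) = RB q m from rfl]
  module

end Aux2

section Part3
open Polynomial

variable (q : ℕ) (m : Fin q)

/-- index in the a-block -/
def aIdx (k l : Fin q) : PicIdx q := Sum.inr (Sum.inr (Sum.inl (k, l)))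
def bIdx (k l : Fin q) : PicIdx q := Sum.inr (Sum.inr (Sum.inr (k, l)))

lemma va_apply_a (i j k l : Fin q) :
    va q i j (aIdx q k l) = if k = i ∧ l = j then 1 else 0 := by
  simp only [va, picBasis, Pi.basisFun_apply, aIdx, Pi.single_apply]
  by_cases h1 : k = i <;> by_cases h2 : l = j <;> simp [h1, h2, Prod.ext_iff, @eq_comm _ i k, @eq_comm _ j l]

lemma va_apply_b (i j k l : Fin q) : va q i j (bIdx q k l) = 0 := by
  simp [va, picBasis, Pi.basisFun_apply, bIdx, Pi.single_apply]

lemma vb_apply_b (i j k l : Fin q) :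
    vb q i j (bIdx q k l) = if k = i ∧ l = j then 1 else 0 := by
  simp only [vb, picBasis, Pi.basisFun_apply, bIdx, Pi.single_apply]
  by_cases h1 : k = i <;> by_cases h2 : l = j <;> simp [h1, h2, Prod.ext_iff, @eq_comm _ i k, @eq_comm _ j l]

lemma vb_apply_a (i j k l : Fin q) : vb q i j (aIdx q k l) = 0 := by
  simp [vb, picBasis, Pi.basisFun_apply, aIdx, Pi.single_apply]

lemma sa_apply_a (k l : Fin q) : sa q (aIdx q k l) = 1 := by
  rw [sa, Finset.sum_apply]
  rw [Finset.sum_congr rfl (fun p _ => va_apply_a q p.1 p.2 k l)]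
  have : ∀ p : Fin q × Fin q, (if k = p.1 ∧ l = p.2 then (1:ℚ) else 0)
      = if (k, l) = p then 1 else 0 := fun p => by simp only [Prod.ext_iff]
  simp_rw [this]
  simp [Finset.sum_ite_eq]

lemma Ar_apply_a (k l : Fin q) :
    Ar q m (aIdx q k l) = (if k = m then (q : ℚ) else 0) - 1 := by
  rw [Ar]
  simp only [Pi.sub_apply, Pi.smul_apply, Finset.sum_apply, sa_apply_a, smul_eq_mul]
  rw [Finset.sum_congr rfl (fun j _ => va_apply_a q m j k l)]
  by_cases h : k = m <;> simp [h]

end Part3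

section Part4
open Polynomial
variable (q : ℕ) (m : Fin q)

lemma sb_apply_b (k l : Fin q) : sb q (bIdx q k l) = 1 := by
  rw [sb, Finset.sum_apply]
  rw [Finset.sum_congr rfl (fun p _ => vb_apply_b q p.1 p.2 k l)]
  have : ∀ p : Fin q × Fin q, (if k = p.1 ∧ l = p.2 then (1:ℚ) else 0)
      = if (k, l) = p then 1 else 0 := fun p => by simp only [Prod.ext_iff]
  simp_rw [this]
  simp [Finset.sum_ite_eq]

lemma sa_apply_b (k l : Fin q) : sa q (bIdx q k l) = 0 := by
  rw [sa, Finset.sum_apply]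
  simp [va_apply_b]

lemma sb_apply_a (k l : Fin q) : sb q (aIdx q k l) = 0 := by
  rw [sb, Finset.sum_apply]
  simp [vb_apply_a]

lemma Ar_apply_b (k l : Fin q) : Ar q m (bIdx q k l) = 0 := by
  rw [Ar]
  simp [va_apply_b, sa_apply_b]

lemma Ac_apply_a (k l : Fin q) :
    Ac q m (aIdx q k l) = (if l = m then (q : ℚ) else 0) - 1 := by
  rw [Ac]
  simp only [Pi.sub_apply, Pi.smul_apply, Finset.sum_apply, sa_apply_a, smul_eq_mul]
  rw [Finset.sum_congr rfl (fun i _ => va_apply_a q i m k l)]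
  by_cases h : l = m <;> simp [h]

lemma Ac_apply_b (k l : Fin q) : Ac q m (bIdx q k l) = 0 := by
  rw [Ac]
  simp [va_apply_b, sa_apply_b]

lemma Br_apply_b (k l : Fin q) :
    Br q m (bIdx q k l) = (if k = m then (q : ℚ) else 0) - 1 := by
  rw [Br]
  simp only [Pi.sub_apply, Pi.smul_apply, Finset.sum_apply, sb_apply_b, smul_eq_mul]
  rw [Finset.sum_congr rfl (fun j _ => vb_apply_b q m j k l)]
  by_cases h : k = m <;> simp [h]

lemma Br_apply_a (k l : Fin q) : Br q m (aIdx q k l) = 0 := by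
  rw [Br]
  simp [vb_apply_a, sb_apply_a]

lemma Bc_apply_b (k l : Fin q) :
    Bc q m (bIdx q k l) = (if l = m then (q : ℚ) else 0) - 1 := by
  rw [Bc]
  simp only [Pi.sub_apply, Pi.smul_apply, Finset.sum_apply, sb_apply_b, smul_eq_mul]
  rw [Finset.sum_congr rfl (fun i _ => vb_apply_b q i m k l)]
  by_cases h : l = m <;> simp [h]

lemma Bc_apply_a (k l : Fin q) : Bc q m (aIdx q k l) = 0 := by
  rw [Bc]
  simp [vb_apply_a, sb_apply_a]

end Part4

lemma det_fin_four' {R : Type*} [CommRing R] (A : Matrix (Fin 4) (Fin 4) R) :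
    A.det =
      A 0 0 * (A 1 1 * (A 2 2 * A 3 3 - A 2 3 * A 3 2) - A 1 2 * (A 2 1 * A 3 3 - A 2 3 * A 3 1)
          + A 1 3 * (A 2 1 * A 3 2 - A 2 2 * A 3 1))
      - A 0 1 * (A 1 0 * (A 2 2 * A 3 3 - A 2 3 * A 3 2) - A 1 2 * (A 2 0 * A 3 3 - A 2 3 * A 3 0)
          + A 1 3 * (A 2 0 * A 3 2 - A 2 2 * A 3 0))
      + A 0 2 * (A 1 0 * (A 2 1 * A 3 3 - A 2 3 * A 3 1) - A 1 1 * (A 2 0 * A 3 3 - A 2 3 * A 3 0)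
          + A 1 3 * (A 2 0 * A 3 1 - A 2 1 * A 3 0))
      - A 0 3 * (A 1 0 * (A 2 1 * A 3 2 - A 2 2 * A 3 1) - A 1 1 * (A 2 0 * A 3 2 - A 2 2 * A 3 0)
          + A 1 2 * (A 2 0 * A 3 1 - A 2 1 * A 3 0)) := by
  rw [Matrix.det_succ_row_zero]
  simp [Fin.sum_univ_succ, Matrix.det_fin_three, Matrix.submatrix_apply, Fin.succAbove,
    show Fin.succ (2 : Fin 3) = (3 : Fin 4) from rfl,
    show Fin.succ (1 : Fin 3) = (2 : Fin 4) from rfl,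
    show Fin.succ (0 : Fin 3) = (1 : Fin 4) from rfl,
    show Fin.castSucc (2 : Fin 3) = (2 : Fin 4) from rfl,
    show Fin.castSucc (1 : Fin 3) = (1 : Fin 4) from rfl,
    show Fin.castSucc (0 : Fin 3) = (0 : Fin 4) from rfl]
  ring


open Polynomial in
/-- For fixed `m`, the row/column sums satisfy `T A_r = −(q−1)A_c − qB_c`,
`T A_c = −(q−1)A_r − qB_r`, `T B_r = A_c + B_c`, `T B_c = A_r + B_r`; the span of
`A_r, A_c, B_r, B_c` is `T`-invariant and the characteristic polynomial of the restriction
of `T` to it is `(X²+1)² − (q−2)²X²`. -/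
theorem Tpic_invariant_rowcol (q : ℕ) (hq : 2 ≤ q) (m : Fin q) :
    Tpic q (Ar q m) = -((q : ℚ) - 1) • Ac q m - (q : ℚ) • Bc q m ∧
    Tpic q (Ac q m) = -((q : ℚ) - 1) • Ar q m - (q : ℚ) • Br q m ∧
    Tpic q (Br q m) = Ac q m + Bc q m ∧
    Tpic q (Bc q m) = Ar q m + Br q m ∧
    ∃ hW : ∀ x ∈ Submodule.span ℚ {Ar q m, Ac q m, Br q m, Bc q m},
        Tpic q x ∈ Submodule.span ℚ {Ar q m, Ac q m, Br q m, Bc q m},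
      ((Tpic q).restrict hW).charpoly =
        (X ^ 2 + 1) ^ 2 - C (((q : ℚ) - 2) ^ 2) * X ^ 2 := by
  refine ⟨T_Ar q m, T_Ac q m, T_Br q m, T_Bc q m, ?_, ?_⟩
  · -- invariance
    intro x hx
    set W := Submodule.span ℚ {Ar q m, Ac q m, Br q m, Bc q m} with hWdef
    have hAr : Ar q m ∈ W := Submodule.subset_span (by simp)
    have hAc : Ac q m ∈ W := Submodule.subset_span (by simp)
    have hBr : Br q m ∈ W := Submodule.subset_span (by simp)
    have hBc : Bc q m ∈ W := Submodule.subset_span (by simp)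
    induction hx using Submodule.span_induction with
    | mem y hy =>
      rcases hy with h | h | h | h
      · rw [h, T_Ar]
        exact Submodule.sub_mem _ (Submodule.smul_mem _ _ hAc) (Submodule.smul_mem _ _ hBc)
      · rw [h, T_Ac]
        exact Submodule.sub_mem _ (Submodule.smul_mem _ _ hAr) (Submodule.smul_mem _ _ hBr)
      · rw [h, T_Br]
        exact Submodule.add_mem _ hAc hBc
      · rw [Set.mem_singleton_iff] at h
        rw [h, T_Bc]
        exact Submodule.add_mem _ hAr hBr
    | zero => simp
    | add y z _ _ hy hz => rw [map_add]; exact Submodule.add_mem _ hy hz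
    | smul a y _ hy => rw [map_smul]; exact Submodule.smul_mem _ _ hy
  · -- charpoly
    have hq0 : (q : ℚ) ≠ 0 := by
      have : (2 : ℚ) ≤ (q : ℚ) := by exact_mod_cast hq
      linarith
    have hq1 : (q : ℚ) - 1 ≠ 0 := by
      have : (2 : ℚ) ≤ (q : ℚ) := by exact_mod_cast hq
      linarith
    -- a second index n ≠ m
    obtain ⟨n, hn⟩ : ∃ n : Fin q, n ≠ m := by
      have : Nontrivial (Fin q) := Fin.nontrivial_iff_two_le.mpr hq
      exact exists_ne m
    set v : Fin 4 → (PicIdx q → ℚ) := ![Ar q m, Ac q m, Br q m, Bc q m] with hv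
    have hrange : Set.range v = {Ar q m, Ac q m, Br q m, Bc q m} := by
      ext y
      simp only [hv, Matrix.range_cons, Matrix.range_empty, Set.singleton_union,
        Set.union_empty, Set.mem_insert_iff, Set.mem_union, Set.mem_singleton_iff]
    -- linear independence
    have hli : LinearIndependent ℚ v := by
      set c : Fin 4 → PicIdx q := ![aIdx q m m, aIdx q m n, bIdx q m m, bIdx q m n] with hc
      set φ : (PicIdx q → ℚ) →ₗ[ℚ] (Fin 4 → ℚ) :=
        LinearMap.pi (fun t => LinearMap.proj (c t)) with hφ
      set N : Matrix (Fin 4) (Fin 4) ℚ :=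
        !![(q:ℚ)-1, (q:ℚ)-1, 0, 0;
           (q:ℚ)-1, -1, 0, 0;
           0, 0, (q:ℚ)-1, (q:ℚ)-1;
           0, 0, (q:ℚ)-1, -1] with hN
      have hcomp : φ ∘ v = fun s => N s := by
        funext s t
        fin_cases s <;> fin_cases t <;>
          simp [hφ, hv, hc, hN, Ar_apply_a, Ar_apply_b, Ac_apply_a, Ac_apply_b,
            Br_apply_a, Br_apply_b, Bc_apply_a, Bc_apply_b, hn,
            Matrix.vecHead, Matrix.vecTail, Matrix.cons_val_zero, Matrix.cons_val_one]
      have hNli : LinearIndependent ℚ (fun s => N s) := by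
        change LinearIndependent ℚ N.row
        rw [Matrix.linearIndependent_rows_iff_isUnit]
        rw [Matrix.isUnit_iff_isUnit_det, isUnit_iff_ne_zero]
        have : N.det = (q:ℚ)^2 * ((q:ℚ)-1)^2 := by
          simp [hN, Matrix.det_succ_row_zero, Fin.sum_univ_succ,
            Matrix.submatrix_apply, Fin.succAbove, Matrix.cons_val_zero,
            Matrix.cons_val_one, Matrix.head_cons, Matrix.vecHead, Matrix.vecTail,
            Matrix.cons_val', Matrix.empty_val', Matrix.cons_val_fin_one]
          ring
        rw [this]
        positivity
      exact LinearIndependent.of_comp φ (hcomp ▸ hNli)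
    -- basis of the span
    have hsp : Submodule.span ℚ (Set.range v)
        = Submodule.span ℚ {Ar q m, Ac q m, Br q m, Bc q m} := by rw [hrange]
    let bW : Module.Basis (Fin 4) ℚ (Submodule.span ℚ {Ar q m, Ac q m, Br q m, Bc q m}) :=
      (Module.Basis.span hli).map (LinearEquiv.ofEq _ _ hsp)
    have hbW : ∀ t, (bW t : PicIdx q → ℚ) = v t := by
      intro t
      simp [bW, Module.Basis.span_apply]
    set f := (Tpic q).restrict _ with hf
    set M4 : Matrix (Fin 4) (Fin 4) ℚ :=
      !![0, -((q:ℚ)-1), 0, 1;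
         -((q:ℚ)-1), 0, 1, 0;
         0, -(q:ℚ), 0, 1;
         -(q:ℚ), 0, 1, 0] with hM4
    have key : ∀ t, f (bW t) = ∑ s, M4 s t • bW s := by
      intro t
      apply Subtype.ext
      rw [hf, LinearMap.restrict_apply]
      have hsum : ((∑ s, M4 s t • bW s : Submodule.span ℚ _) : PicIdx q → ℚ)
          = ∑ s, M4 s t • (bW s : PicIdx q → ℚ) := by
        push_cast
        rfl
      rw [hsum]
      simp only [hbW]
      fin_cases t
      · simp [Fin.sum_univ_four, hM4, hv]
        rw [T_Ar]
        module
      · simp [Fin.sum_univ_four, hM4, hv]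
        rw [T_Ac]
        module
      · simp [Fin.sum_univ_four, hM4, hv]
        rw [T_Br]
      · simp [Fin.sum_univ_four, hM4, hv]
        rw [T_Bc]
    have hmat : LinearMap.toMatrix bW bW f = M4 := by
      ext s t
      rw [LinearMap.toMatrix_apply, key t, Module.Basis.repr_sum_self]
    have hchar : f.charpoly = M4.charpoly := by
      rw [← LinearMap.charpoly_toMatrix f bW, hmat]
    rw [hchar]
    -- compute the characteristic polynomial of the explicit matrix
    rw [Matrix.charpoly]
    have hcm : Matrix.charmatrix M4 =
        !![X, C ((q:ℚ)-1), 0, -1;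
           C ((q:ℚ)-1), X, -1, 0;
           0, C (q:ℚ), X, -1;
           C (q:ℚ), 0, -1, X] := by
      ext s t
      fin_cases s <;> fin_cases t <;>
        simp [hM4, Matrix.charmatrix_apply_eq, Matrix.charmatrix_apply_ne, Matrix.vecHead, Matrix.vecTail]
    rw [hcm, det_fin_four']
    simp only [Matrix.cons_val', Matrix.cons_val_zero, Matrix.cons_val_one,
      Matrix.head_cons, Matrix.empty_val', Matrix.cons_val_fin_one, Matrix.head_fin_const,
      Matrix.cons_val_two, Matrix.cons_val_three, Matrix.tail_cons, Matrix.of_apply]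
    simp only [map_sub, map_pow, map_one, map_natCast, map_ofNat]
    ring
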